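/- arXiv:0804.2333 — 8 statements merged into one kernel-verified Lean document; each statement's English description precedes it below -/
import Mathlib

section
/- If g : [a,b] → ℝ is Riemann integrable, c ∈ ℝ, G(t) := c + ∫_a^t g for t ∈ [a,b], and f is Riemann integrable on the range of G, then (f ∘ G)·g is Riemann integrable on [a,b] and ∫_{G(a)}^{G(b)} f = ∫_a^b (f ∘ G)·g. -/
open MeasureTheory Set

/-- Riemann integrability of a bounded function on a set, via the Lebesgue criterion:
`f` is bounded on `s` and continuous (within `s`) at almost every point of `s`. -/
def RiemannIntegrableOn (f : ℝ → ℝ) (s : Set ℝ) : Prop :=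
  (∃ C : ℝ, ∀ x ∈ s, |f x| ≤ C) ∧
    ∀ᵐ x ∂(volume.restrict s), ContinuousWithinAt f s x

/-!
Both `G` and the primitive `F u = ∫ y in G a..u, f y` are Lipschitz, so `F ∘ G` is absolutely
continuous on `[a, b]` and is the integral of its a.e. derivative. At an interior point `t` where
`g` is continuous, `G' t = g t`. If `g t = 0`, the Lipschitz bound on `F` gives `(F ∘ G)' t = 0`,
and `f (G t) * g t` is continuous at `t` because `f` is bounded. If `g t ≠ 0`, then `G` expands
distances near `t`, so it pulls the null set of discontinuities of `f` back to a null set; off it,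
`f` is continuous at `G t` and the chain rule applies.
-/

open Filter Topology Asymptotics
open scoped NNReal ENNReal

theorem aemeasurable_restrict_of_ae_continuousWithinAt {α β : Type*} [MeasurableSpace α]
    [TopologicalSpace α] [OpensMeasurableSpace α] [MeasurableSpace β] [TopologicalSpace β]
    [BorelSpace β] {μ : Measure α} {f : α → β} {s : Set α} (hs : NullMeasurableSet s μ)
    (hf : ∀ᵐ x ∂μ.restrict s, ContinuousWithinAt f s x) :
    AEMeasurable f (μ.restrict s) := by
  set t := {x | ContinuousWithinAt f s x} ∩ s
  have hts : t =ᵐ[μ] s := by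
    filter_upwards [(ae_restrict_iff'₀ hs).1 hf] with x hx
    exact propext ⟨And.right, fun h => ⟨hx h, h⟩⟩
  have hcont : ContinuousOn f t := fun x hx => hx.1.mono inter_subset_right
  rw [← Measure.restrict_congr_set hts]
  exact hcont.aemeasurable₀ (hs.congr hts.symm)

theorem RiemannIntegrableOn.integrableOn {f : ℝ → ℝ} {s : Set ℝ} (hf : RiemannIntegrableOn f s)
    (hs : MeasurableSet s) (hs' : volume s ≠ ∞) : IntegrableOn f s := by
  obtain ⟨⟨C, hC⟩, hcont⟩ := hf
  exact ⟨(aemeasurable_restrict_of_ae_continuousWithinAt hs.nullMeasurableSet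
      hcont).aestronglyMeasurable,
    .restrict_of_bounded (C := C) hs'.lt_top ((ae_restrict_iff' hs).2 (.of_forall hC))⟩

theorem lipschitzOnWith_intervalIntegral {E : Type*} [NormedAddCommGroup E] [NormedSpace ℝ E]
    {f : ℝ → E} {s : Set ℝ} {u₀ C : ℝ} (hs : s.OrdConnected) (hu₀ : u₀ ∈ s)
    (hf : IntegrableOn f s) (hC : ∀ x ∈ s, ‖f x‖ ≤ C) :
    LipschitzOnWith C.toNNReal (fun u => ∫ x in u₀..u, f x) s := by
  have hint : ∀ u ∈ s, IntervalIntegrable f volume u₀ u := fun u hu =>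
    (hf.mono_set (hs.uIcc_subset hu₀ hu)).intervalIntegrable
  refine LipschitzOnWith.of_dist_le' fun u hu v hv => ?_
  rw [dist_eq_norm, intervalIntegral.integral_interval_sub_left (hint u hu) (hint v hv),
    Real.dist_eq]
  exact intervalIntegral.norm_integral_le_of_norm_le_const fun x hx =>
    hC x (hs.uIcc_subset hv hu (uIoc_subset_uIcc hx))

theorem LipschitzOnWith.hasDerivAt_comp_of_hasDerivAt_zero {𝕜 E F : Type*}
    [NontriviallyNormedField 𝕜] [NormedAddCommGroup E] [NormedSpace 𝕜 E]
    [NormedAddCommGroup F] [NormedSpace 𝕜 F] {f : E → F} {g : 𝕜 → E} {s : Set E} {K : ℝ≥0}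
    {x : 𝕜} (hf : LipschitzOnWith K f s) (hg : HasDerivAt g 0 x) (hgs : ∀ᶠ y in 𝓝 x, g y ∈ s) :
    HasDerivAt (f ∘ g) 0 x := by
  have hO : (fun y => f (g y) - f (g x)) =O[𝓝 x] (fun y => g y - g x) :=
    .of_bound K (hgs.mono fun y hy => hf.norm_sub_le hy hgs.self_of_nhds)
  have ho := hg.isLittleO
  simp only [smul_zero, sub_zero] at ho
  simpa only [hasDerivAt_iff_isLittleO, Function.comp_apply, smul_zero, sub_zero] using
    hO.trans_isLittleO ho

theorem hausdorffMeasure_eq_zero_of_antilipschitzWith_domRestrict {X Y : Type*} [EMetricSpace X]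
    [MeasurableSpace X] [BorelSpace X] [EMetricSpace Y] [MeasurableSpace Y] [BorelSpace Y]
    {f : X → Y} {s : Set X} {K : ℝ≥0} {d : ℝ} (hd : 0 ≤ d)
    (hf : AntilipschitzWith K (s.domRestrict f)) (hs : μH[d] (f '' s) = 0) : μH[d] s = 0 := by
  have h := hf.le_hausdorffMeasure_image hd univ
  rw [← isometry_subtype_coe.hausdorffMeasure_image (Or.inl hd), Subtype.coe_image_univ,
    image_univ, range_domRestrict, hs, mul_zero] at h
  exact nonpos_iff_eq_zero.1 h

theorem HasDerivAt.exists_nat_dist_le_mul_dist {G : ℝ → ℝ} {G' x : ℝ} (hG : HasDerivAt G G' x)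
    (hG' : G' ≠ 0) :
    ∃ n : ℕ, ∀ y, dist y x < (n + 1 : ℝ)⁻¹ → dist y x ≤ (n + 1) * dist (G y) (G x) := by
  have hO : (fun y => y - x) =O[𝓝 x] (fun y => G y - G x) :=
    (hG.isTheta_sub hG').isBigO_symm.comp_tendsto (tendsto_id.prodMk tendsto_const_pure)
  obtain ⟨c, hc⟩ := hO.bound
  obtain ⟨ε, hε, hball⟩ := Metric.eventually_nhds_iff.1 hc
  obtain ⟨n, hn⟩ := exists_nat_gt (max c ε⁻¹)
  have hcn : c ≤ n + 1 := by linarith [le_max_left c ε⁻¹]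
  have hεn : (n + 1 : ℝ)⁻¹ < ε := inv_lt_of_inv_lt₀ hε (by linarith [le_max_right c ε⁻¹])
  refine ⟨n, fun y hy => ?_⟩
  have hy' := hball (hy.trans hεn)
  rw [Real.norm_eq_abs, Real.norm_eq_abs] at hy'
  rw [Real.dist_eq, Real.dist_eq]
  exact hy'.trans (mul_le_mul_of_nonneg_right hcn (abs_nonneg _))

theorem ae_comp_of_deriv_ne_zero {G : ℝ → ℝ} {p : ℝ → Prop} (hp : ∀ᵐ y, p y) :
    ∀ᵐ x, deriv G x ≠ 0 → p (G x) := by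
  -- On pieces of `E n` of diameter `< (n + 1)⁻¹`, `G` is antilipschitz with constant `n + 1`.
  set E : ℕ → Set ℝ := fun n => {x | ¬ p (G x) ∧
    ∀ y, dist y x < (n + 1 : ℝ)⁻¹ → dist y x ≤ (n + 1) * dist (G y) (G x)}
  have hcover : {x | ¬ (deriv G x ≠ 0 → p (G x))} ⊆ ⋃ n, E n := by
    intro x hx
    obtain ⟨hx₀, hpx⟩ : deriv G x ≠ 0 ∧ ¬ p (G x) := Classical.not_imp.1 hx
    obtain ⟨n, hn⟩ :=
      (differentiableAt_of_deriv_ne_zero hx₀).hasDerivAt.exists_nat_dist_le_mul_dist hx₀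
    exact mem_iUnion.2 ⟨n, hpx, hn⟩
  refine ae_iff.2 (measure_mono_null hcover (measure_iUnion_null fun n => ?_))
  refine measure_null_of_locally_null _ fun x _ => ⟨E n ∩ Metric.ball x ((n + 1 : ℝ)⁻¹ / 2),
    inter_mem_nhdsWithin _ (Metric.ball_mem_nhds _ (by positivity)), ?_⟩
  rw [← hausdorffMeasure_real]
  refine hausdorffMeasure_eq_zero_of_antilipschitzWith_domRestrict (K := n + 1) zero_le_one
    (AntilipschitzWith.of_le_mul_dist (f := (E n ∩ Metric.ball x ((n + 1 : ℝ)⁻¹ / 2)).domRestrict G)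
      fun y z => ?_) ?_
  · have hyz : dist (y : ℝ) z < (n + 1 : ℝ)⁻¹ := by
      have := dist_triangle_right (y : ℝ) z x
      linarith [Metric.mem_ball.1 y.2.2, Metric.mem_ball.1 z.2.2]
    push_cast
    exact z.2.1.2 y hyz
  · rw [hausdorffMeasure_real]
    exact measure_mono_null (fun _ ⟨w, hw, hwy⟩ => hwy ▸ hw.1.1) (ae_iff.1 hp)

theorem hasDerivAt_intervalIntegral_comp {f G : ℝ → ℝ} {m M u₀ C t G' : ℝ}
    (hf : IntegrableOn f (Icc m M)) (hC : ∀ y ∈ Icc m M, |f y| ≤ C) (hu₀ : u₀ ∈ Icc m M)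
    (hG : HasDerivAt G G' t) (hGmem : ∀ᶠ x in 𝓝 t, G x ∈ Icc m M)
    (hcont : G' ≠ 0 → ContinuousWithinAt f (Icc m M) (G t)) :
    HasDerivAt (fun x => ∫ y in u₀..G x, f y) (f (G t) * G') t := by
  rcases eq_or_ne G' 0 with rfl | hG'
  · rw [mul_zero]
    exact (lipschitzOnWith_intervalIntegral ordConnected_Icc hu₀ hf hC)
      |>.hasDerivAt_comp_of_hasDerivAt_zero hG hGmem
  · have hGt : Fact (G t ∈ Icc m M) := ⟨hGmem.self_of_nhds⟩
    have hF : HasDerivWithinAt (fun u => ∫ y in u₀..u, f y) (f (G t)) (Icc m M) (G t) :=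
      intervalIntegral.integral_hasDerivWithinAt_right
        (hf.mono_set (uIcc_subset_Icc hu₀ hGt.out)).intervalIntegrable
        ⟨Icc m M, self_mem_nhdsWithin, hf.aestronglyMeasurable⟩ (hcont hG')
    exact hF.comp_hasDerivAt t hG hGmem

theorem continuousWithinAt_comp_mul {α β : Type*} [TopologicalSpace α] [TopologicalSpace β]
    {f : β → ℝ} {G : α → β} {g : α → ℝ} {s : Set α} {J : Set β} {t : α} {C : ℝ}
    (hC : ∀ y ∈ J, |f y| ≤ C) (hGJ : MapsTo G s J) (hG : ContinuousWithinAt G s t)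
    (hg : ContinuousWithinAt g s t) (hf : g t ≠ 0 → ContinuousWithinAt f J (G t)) :
    ContinuousWithinAt (fun x => f (G x) * g x) s t := by
  rcases eq_or_ne (g t) 0 with hgt | hgt
  · have hg₀ : Tendsto g (𝓝[s] t) (𝓝 0) := hgt ▸ hg
    have hbdd : IsBoundedUnder (· ≤ ·) (𝓝[s] t) (fun x => ‖f (G x)‖) :=
      ⟨C, eventually_map.2 (eventually_nhdsWithin_of_forall fun x hx => hC _ (hGJ hx))⟩
    simpa only [ContinuousWithinAt, hgt, mul_zero, mul_comm] using
      hg₀.zero_mul_isBoundedUnder_le hbdd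
  · exact ((hf hgt).comp hG hGJ).mul hg

theorem LipschitzOnWith.integral_eq_sub_of_ae_hasDerivAt {H φ : ℝ → ℝ} {a b : ℝ} {K : ℝ≥0}
    (hab : a ≤ b) (hH : LipschitzOnWith K H (Icc a b))
    (hφ : ∀ᵐ t, t ∈ Ioo a b → HasDerivAt H (φ t) t) :
    ∫ t in a..b, φ t = H b - H a := by
  rw [← uIcc_of_le hab] at hH
  rw [← hH.absolutelyContinuousOnInterval.integral_deriv_eq_sub]
  refine intervalIntegral.integral_congr_ae ?_
  filter_upwards [hφ, Measure.ae_ne volume b] with t ht htb hmem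
  rw [uIoc_of_le hab] at hmem
  exact (ht ⟨hmem.1, lt_of_le_of_ne hmem.2 htb⟩).deriv.symm

section IndefiniteIntegral

variable {a b c : ℝ} {g G : ℝ → ℝ}

theorem lipschitzOnWith_of_eq_add_intervalIntegral (hgi : IntegrableOn g (Icc a b))
    (hG : ∀ t ∈ Icc a b, G t = c + ∫ x in a..t, g x) (hab : a ≤ b) {D : ℝ}
    (hD : ∀ t ∈ Icc a b, |g t| ≤ D) : LipschitzOnWith D.toNNReal G (Icc a b) :=
  fun x hx y hy => by
    simpa only [hG x hx, hG y hy, edist_add_left] using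
      lipschitzOnWith_intervalIntegral ordConnected_Icc (left_mem_Icc.2 hab) hgi hD hx hy

theorem hasDerivAt_of_eq_add_intervalIntegral (hgi : IntegrableOn g (Icc a b))
    (hG : ∀ t ∈ Icc a b, G t = c + ∫ x in a..t, g x) {t : ℝ} (ht : t ∈ Ioo a b)
    (hgt : ContinuousWithinAt g (Icc a b) t) : HasDerivAt G (g t) t := by
  have hIcc : Icc a b ∈ 𝓝 t := Icc_mem_nhds ht.1 ht.2
  have hint : IntervalIntegrable g volume a t :=
    (hgi.mono_set (uIcc_subset_Icc (left_mem_Icc.2 (ht.1.trans ht.2).le)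
      (Ioo_subset_Icc_self ht))).intervalIntegrable
  have hprim : HasDerivAt (fun u => ∫ x in a..u, g x) (g t) t :=
    intervalIntegral.integral_hasDerivAt_right hint ⟨_, hIcc, hgi.aestronglyMeasurable⟩
      (hgt.continuousAt hIcc)
  exact (hprim.const_add c).congr_of_eventuallyEq (eventually_of_mem hIcc hG)

end IndefiniteIntegral

/-- Kestelman's change of variables theorem. -/
theorem kestelman_change_of_variables (a b c : ℝ) (hab : a ≤ b)
    (g G f : ℝ → ℝ)
    (hg : RiemannIntegrableOn g (Icc a b))
    (hG : ∀ t ∈ Icc a b, G t = c + ∫ x in a..t, g x)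
    (hf : RiemannIntegrableOn f (G '' Icc a b)) :
    RiemannIntegrableOn (fun t => f (G t) * g t) (Icc a b) ∧
      ∫ y in G a..G b, f y = ∫ t in a..b, f (G t) * g t := by
  have hgi := hg.integrableOn measurableSet_Icc measure_Icc_lt_top.ne
  obtain ⟨⟨D, hD⟩, hgcont⟩ := hg
  have hGlip := lipschitzOnWith_of_eq_add_intervalIntegral hgi hG hab hD
  obtain ⟨m, M, hrange⟩ : ∃ m M, G '' Icc a b = Icc m M :=
    ⟨_, _, hGlip.continuousOn.image_Icc hab⟩
  have hGmaps : MapsTo G (Icc a b) (Icc m M) := hrange ▸ mapsTo_image G _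
  rw [hrange] at hf
  have hfi := hf.integrableOn measurableSet_Icc measure_Icc_lt_top.ne
  obtain ⟨⟨C, hC⟩, hfcont⟩ := hf
  have hgood : ∀ᵐ t, t ∈ Ioo a b → ContinuousWithinAt g (Icc a b) t ∧
      (g t ≠ 0 → ContinuousWithinAt f (Icc m M) (G t)) := by
    filter_upwards [(ae_restrict_iff' measurableSet_Icc).1 hgcont,
      ae_comp_of_deriv_ne_zero (G := G) ((ae_restrict_iff' measurableSet_Icc).1 hfcont)]
      with t hgt hft ht
    have hgt := hgt (Ioo_subset_Icc_self ht)
    refine ⟨hgt, fun hg0 => hft ?_ (hGmaps (Ioo_subset_Icc_self ht))⟩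
    rwa [(hasDerivAt_of_eq_add_intervalIntegral hgi hG ht hgt).deriv]
  refine ⟨⟨⟨C * D, fun t ht => ?_⟩, ?_⟩, ?_⟩
  · rw [abs_mul]
    exact mul_le_mul (hC _ (hGmaps ht)) (hD t ht) (abs_nonneg _)
      ((abs_nonneg _).trans (hC _ (hGmaps ht)))
  · rw [← Measure.restrict_congr_set Ioo_ae_eq_Icc]
    refine (ae_restrict_iff' measurableSet_Ioo).2 (hgood.mono fun t h ht => ?_)
    exact continuousWithinAt_comp_mul hC hGmaps (hGlip.continuousOn t (Ioo_subset_Icc_self ht))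
      (h ht).1 (h ht).2
  · have hH := (lipschitzOnWith_intervalIntegral ordConnected_Icc (hGmaps (left_mem_Icc.2 hab))
      hfi hC).comp hGlip hGmaps
    have := hH.integral_eq_sub_of_ae_hasDerivAt hab (hgood.mono fun t h ht =>
      hasDerivAt_intervalIntegral_comp hfi hC (hGmaps (left_mem_Icc.2 hab))
        (hasDerivAt_of_eq_add_intervalIntegral hgi hG ht (h ht).1)
        (eventually_of_mem (Icc_mem_nhds ht.1 ht.2) hGmaps) (h ht).2)
    simpa using this.symm
end

section
/- Let Ω ⊆ ℝ^m be open, u ∈ Ω, G : Ω → ℝ^m strongly differentiable at u with invertible derivative M := G'(u). Then for every ε ∈ (0,1) there is δ > 0 such that for all x ∈ Ω and r > 0 with B̄(x,r) ⊆ B̄(u,δ), one has ℓ_x(B̄(x,(1−ε)r)) ⊆ G(B̄(x,r)) ⊆ ℓ_x(B̄(x,(1+ε)r)), where ℓ_x(z) := G(x) + M(z−x). In particular G(u) is an interior point of the range of G. -/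
/-!
Composing with `M⁻¹` replaces `G` by `h = M⁻¹ ∘ G`, which near `u` is an `ε`-Lipschitz
perturbation of the identity, and turns `ℓ_x` into the translation `z ↦ h x + (z - x)`.
Such a perturbation maps `B̄(x, r)` into `B̄(h x, (1 + ε) r)` by the triangle inequality, and onto
a set containing `B̄(h x, (1 - ε) r)` by the contraction principle, as in the proof of the inverse
function theorem (`ApproximatesLinearOn.surjOn_closedBall_of_nonlinearRightInverse`).
-/

open Set Metric

/-- `f` is strongly (strictly) differentiable at `u`, an interior point of `s`,
with derivative `A`. -/
def HasStrongDerivAt {m n : ℕ} (f : (Fin m → ℝ) → (Fin n → ℝ))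
    (A : (Fin m → ℝ) →L[ℝ] (Fin n → ℝ)) (s : Set (Fin m → ℝ)) (u : Fin m → ℝ) : Prop :=
  ∀ ε > (0 : ℝ), ∃ δ > (0 : ℝ), ball u δ ⊆ s ∧
    ∀ x ∈ ball u δ, ∀ y ∈ ball u δ, ‖f x - f y - A (x - y)‖ ≤ ε * ‖x - y‖

open scoped NNReal Topology

section ApproximatesLinearOn

variable {𝕜 : Type*} [NontriviallyNormedField 𝕜]
  {E : Type*} [NormedAddCommGroup E] [NormedSpace 𝕜 E]
  {F : Type*} [NormedAddCommGroup F] [NormedSpace 𝕜 F]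
  {s : Set E} {c : ℝ≥0} {x : E} {r : ℝ}

-- Bound `1` rather than `‖id‖₊`, which vanishes on the trivial space.
def ContinuousLinearMap.idNonlinearRightInverse :
    (ContinuousLinearMap.id 𝕜 E).NonlinearRightInverse where
  toFun := id
  nnnorm := 1
  bound' _ := by simp
  right_inv' _ := rfl

theorem ApproximatesLinearOn.closedBall_subset_image_closedBall [CompleteSpace E] {g : E → E}
    (hg : ApproximatesLinearOn g (ContinuousLinearMap.id 𝕜 E) s c) (hr : 0 ≤ r)
    (hs : closedBall x r ⊆ s) : closedBall (g x) ((1 - c) * r) ⊆ g '' closedBall x r := by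
  have h := hg.surjOn_closedBall_of_nonlinearRightInverse
    ContinuousLinearMap.idNonlinearRightInverse hr hs
  simp only [ContinuousLinearMap.idNonlinearRightInverse, NNReal.coe_one, inv_one] at h
  exact h

theorem ApproximatesLinearOn.image_closedBall_subset_closedBall {f : E → F} {f' : E →L[𝕜] F}
    (hf : ApproximatesLinearOn f f' s c) (hs : closedBall x r ⊆ s) :
    f '' closedBall x r ⊆ closedBall (f x) ((‖f'‖₊ + c) * r) := by
  rintro _ ⟨y, hy, rfl⟩
  have hx : x ∈ s := hs (mem_closedBall_self (dist_nonneg.trans hy))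
  calc dist (f y) (f x) = dist (s.domRestrict f ⟨y, hs hy⟩) (s.domRestrict f ⟨x, hx⟩) := rfl
    _ ≤ (‖f'‖₊ + c) * dist y x := hf.lipschitz.dist_le_mul _ _
    _ ≤ (‖f'‖₊ + c) * r := by gcongr; exact hy

variable {f : E → F} (M : E ≃L[𝕜] F)

theorem image_affine_closedBall (x : E) (ρ : ℝ) :
    (fun z => f x + M (z - x)) '' closedBall x ρ = M '' closedBall (M.symm (f x)) ρ := by
  have hℓ : (fun z => f x + M (z - x))
      = M ∘ ((IsometryEquiv.subRight x).trans (IsometryEquiv.addLeft (M.symm (f x)))) := by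
    ext z; simp
  rw [hℓ, image_comp, IsometryEquiv.image_closedBall]
  simp

theorem affine_image_closedBall_mem_nhds (x : E) {ρ : ℝ} (hρ : 0 < ρ) :
    (fun z => f x + M (z - x)) '' closedBall x ρ ∈ 𝓝 (f x) := by
  rw [image_affine_closedBall]
  simpa using M.toHomeomorph.isOpenMap.image_mem_nhds (closedBall_mem_nhds (M.symm (f x)) hρ)

theorem image_closedBall_subset_affine_image
    (hf : ApproximatesLinearOn (M.symm ∘ f) (ContinuousLinearMap.id 𝕜 E) s c) (hr : 0 ≤ r)
    (hs : closedBall x r ⊆ s) :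
    f '' closedBall x r ⊆ (fun z => f x + M (z - x)) '' closedBall x ((1 + c) * r) := by
  rw [image_affine_closedBall, ← M.image_symm_image (f '' _), ← image_comp M.symm f]
  refine image_mono ((hf.image_closedBall_subset_closedBall hs).trans ?_)
  exact closedBall_subset_closedBall (by gcongr; exact ContinuousLinearMap.norm_id_le)

variable [CompleteSpace E]

theorem affine_image_closedBall_subset_image
    (hf : ApproximatesLinearOn (M.symm ∘ f) (ContinuousLinearMap.id 𝕜 E) s c) (hr : 0 ≤ r)
    (hs : closedBall x r ⊆ s) :
    (fun z => f x + M (z - x)) '' closedBall x ((1 - c) * r) ⊆ f '' closedBall x r := by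
  rw [image_affine_closedBall, ← M.image_symm_image (f '' _), ← image_comp M.symm f]
  exact image_mono (hf.closedBall_subset_image_closedBall hr hs)

end ApproximatesLinearOn

section HasStrongDerivAt

variable {m n p : ℕ} {f : (Fin m → ℝ) → (Fin n → ℝ)} {A : (Fin m → ℝ) →L[ℝ] (Fin n → ℝ)}
  {s : Set (Fin m → ℝ)} {u : Fin m → ℝ}

theorem HasStrongDerivAt.clm_comp (hf : HasStrongDerivAt f A s u)
    (L : (Fin n → ℝ) →L[ℝ] (Fin p → ℝ)) : HasStrongDerivAt (L ∘ f) (L.comp A) s u := by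
  intro ε hε
  obtain ⟨δ, hδ, hs, hfδ⟩ := hf (ε / (‖L‖ + 1)) (by positivity)
  refine ⟨δ, hδ, hs, fun x hx y hy => ?_⟩
  have hL : ‖L‖ * (ε / (‖L‖ + 1)) ≤ ε := by
    rw [mul_div_left_comm]
    exact mul_le_of_le_one_right hε.le (div_le_one_of_le₀ (by linarith) (by positivity))
  calc ‖(L ∘ f) x - (L ∘ f) y - L.comp A (x - y)‖ = ‖L (f x - f y - A (x - y))‖ := by simp
    _ ≤ ‖L‖ * (ε / (‖L‖ + 1) * ‖x - y‖) := L.le_opNorm_of_le (hfδ x hx y hy)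
    _ ≤ ε * ‖x - y‖ := by rw [← mul_assoc]; gcongr

theorem HasStrongDerivAt.exists_closedBall_approximatesLinearOn (hf : HasStrongDerivAt f A s u)
    {c : ℝ≥0} (hc : 0 < c) :
    ∃ δ > 0, closedBall u δ ⊆ s ∧ ApproximatesLinearOn f A (closedBall u δ) c := by
  obtain ⟨δ, hδ, hs, hfδ⟩ := hf c hc
  have hsub : closedBall u (δ / 2) ⊆ ball u δ := closedBall_subset_ball (half_lt_self hδ)
  exact ⟨δ / 2, half_pos hδ, hsub.trans hs, fun x hx y hy => hfδ x (hsub hx) y (hsub hy)⟩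

end HasStrongDerivAt

theorem strongDeriv_inverse_inclusions_general {m : ℕ} (Ω : Set (Fin m → ℝ))
    (u : Fin m → ℝ) (G : (Fin m → ℝ) → (Fin m → ℝ))
    (M : (Fin m → ℝ) ≃L[ℝ] (Fin m → ℝ))
    (hG : HasStrongDerivAt G (M : (Fin m → ℝ) →L[ℝ] (Fin m → ℝ)) Ω u) :
    (∀ ε ∈ Ioo (0 : ℝ) 1, ∃ δ > (0 : ℝ), closedBall u δ ⊆ Ω ∧
      ∀ x ∈ Ω, ∀ r > (0 : ℝ), closedBall x r ⊆ closedBall u δ →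
        (fun z => G x + M (z - x)) '' closedBall x ((1 - ε) * r) ⊆ G '' closedBall x r ∧
        G '' closedBall x r ⊆ (fun z => G x + M (z - x)) '' closedBall x ((1 + ε) * r)) ∧
    G u ∈ interior (G '' Ω) := by
  have hsymmG : HasStrongDerivAt (M.symm ∘ G) (ContinuousLinearMap.id ℝ _) Ω u := by
    simpa using hG.clm_comp (M.symm : (Fin m → ℝ) →L[ℝ] (Fin m → ℝ))
  refine ⟨fun ε ⟨hε, _⟩ => ?_, ?_⟩
  · obtain ⟨δ, hδ, hδΩ, happrox⟩ :=
      hsymmG.exists_closedBall_approximatesLinearOn (Real.toNNReal_pos.2 hε)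
    refine ⟨δ, hδ, hδΩ, fun x _ r hr hxr => ?_⟩
    rw [← Real.coe_toNNReal ε hε.le]
    exact ⟨affine_image_closedBall_subset_image M happrox hr.le hxr,
      image_closedBall_subset_affine_image M happrox hr.le hxr⟩
  · obtain ⟨δ, hδ, hδΩ, happrox⟩ :=
      hsymmG.exists_closedBall_approximatesLinearOn (c := 1 / 2) (by norm_num)
    have hρ : 0 < (1 - ((1 / 2 : ℝ≥0) : ℝ)) * δ := by norm_num [hδ]
    refine mem_interior_iff_mem_nhds.2
      (Filter.mem_of_superset (affine_image_closedBall_mem_nhds M u hρ) ?_)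
    exact (affine_image_closedBall_subset_image M happrox hδ.le subset_rfl).trans (image_mono hδΩ)

/-- The quantitative inverse-function-type theorem for strongly differentiable maps
with invertible derivative (the space `Fin m → ℝ` carries the sup-norm, so closed
balls are cubes). -/
theorem strongDeriv_inverse_inclusions {m : ℕ} (Ω : Set (Fin m → ℝ)) (hΩ : IsOpen Ω)
    (u : Fin m → ℝ) (hu : u ∈ Ω) (G : (Fin m → ℝ) → (Fin m → ℝ))
    (M : (Fin m → ℝ) ≃L[ℝ] (Fin m → ℝ))
    (hG : HasStrongDerivAt G (M : (Fin m → ℝ) →L[ℝ] (Fin m → ℝ)) Ω u) :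
    (∀ ε ∈ Ioo (0 : ℝ) 1, ∃ δ > (0 : ℝ), closedBall u δ ⊆ Ω ∧
      ∀ x ∈ Ω, ∀ r > (0 : ℝ), closedBall x r ⊆ closedBall u δ →
        (fun z => G x + M (z - x)) '' closedBall x ((1 - ε) * r) ⊆ G '' closedBall x r ∧
        G '' closedBall x r ⊆ (fun z => G x + M (z - x)) '' closedBall x ((1 + ε) * r)) ∧
    G u ∈ interior (G '' Ω) :=
  strongDeriv_inverse_inclusions_general Ω u G M hG
end

section
/- If f : U → ℝ^n with u an interior point of U ⊆ ℝ^m is strongly differentiable at u, then the derivative map x ↦ f'(x) (defined wherever f is differentiable) is continuous at u; that is, for every ε > 0 there is δ > 0 such that whenever x ∈ B(u,δ) and f is differentiable at x, ‖f'(x) − f'(u)‖ ≤ ε. -/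
open Set Metric

open Filter Topology

/-- Applying the converse mean value inequality to `y ↦ f y - A y`, whose derivative is `B - A`. -/
theorem HasFDerivAt.norm_sub_le_of_eventually_norm_sub_le {𝕜 E F : Type*}
    [NontriviallyNormedField 𝕜] [NormedAddCommGroup E] [NormedSpace 𝕜 E]
    [NormedAddCommGroup F] [NormedSpace 𝕜 F] {f : E → F} {A B : E →L[𝕜] F} {x : E} {C : ℝ}
    (hB : HasFDerivAt f B x) (hC : 0 ≤ C)
    (h : ∀ᶠ y in 𝓝 x, ‖f y - f x - A (y - x)‖ ≤ C * ‖y - x‖) : ‖B - A‖ ≤ C := by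
  refine (hB.sub A.hasFDerivAt).le_of_lip' hC ?_
  filter_upwards [h] with y hy
  rwa [map_sub, sub_sub_sub_comm] at hy

theorem deriv_continuous_at_strongDeriv_point_general {m n : ℕ} (U : Set (Fin m → ℝ))
    (u : Fin m → ℝ) (f : (Fin m → ℝ) → (Fin n → ℝ))
    (A : (Fin m → ℝ) →L[ℝ] (Fin n → ℝ)) (hf : HasStrongDerivAt f A U u) :
    ∀ ε > (0 : ℝ), ∃ δ > (0 : ℝ), ∀ x ∈ ball u δ,
      ∀ B : (Fin m → ℝ) →L[ℝ] (Fin n → ℝ), HasFDerivAt f B x → ‖B - A‖ ≤ ε := by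
  intro ε hε
  obtain ⟨δ, hδ, -, hlip⟩ := hf ε hε
  refine ⟨δ, hδ, fun x hx B hB => hB.norm_sub_le_of_eventually_norm_sub_le hε.le ?_⟩
  filter_upwards [isOpen_ball.mem_nhds hx] with y hy using hlip y hy x hx

/-- If `f` is strongly differentiable at `u`, then the derivative map `x ↦ f'(x)`,
defined wherever `f` is differentiable, is continuous at `u`. -/
theorem deriv_continuous_at_strongDeriv_point {m n : ℕ} (U : Set (Fin m → ℝ))
    (u : Fin m → ℝ) (hu : u ∈ interior U) (f : (Fin m → ℝ) → (Fin n → ℝ))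
    (A : (Fin m → ℝ) →L[ℝ] (Fin n → ℝ)) (hf : HasStrongDerivAt f A U u) :
    ∀ ε > (0 : ℝ), ∃ δ > (0 : ℝ), ∀ x ∈ ball u δ,
      ∀ B : (Fin m → ℝ) →L[ℝ] (Fin n → ℝ), HasFDerivAt f B x → ‖B - A‖ ≤ ε :=
  deriv_continuous_at_strongDeriv_point_general U u f A hf
end

section
/- Suppose G : A → ℝ^m is strongly differentiable at an interior point u of A ⊆ ℝ^m and the derivative G'(u) is a singular (non-invertible) linear map. Then for every ε > 0 there is δ > 0 such that B(u,δ) ⊆ A and V*(G(I)) ≤ ε·V(I) for every cube I contained in B(u,δ). -/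
/-!
The image `K` of the unit ball under the singular derivative `A'` is compact and Lebesgue-null,
so some closed thickening `cthickening η K` has measure `< ε 2ᵐ`. Strong differentiability with
constant `η` puts the image of every small cube `closedBall x r` inside the closed set
`G x + r • cthickening η K`, of measure `rᵐ μ(cthickening η K) ≤ ε (2r)ᵐ`.
-/

open Set Metric MeasureTheory

/-- The outer Jordan content of a bounded set (the Lebesgue measure of its closure). -/
noncomputable def jContentOuter {m : ℕ} (X : Set (Fin m → ℝ)) : ℝ :=
  (volume (closure X)).toReal

open Filter Topology
open scoped Pointwise

section AffineApprox

variable {E F : Type*} [NormedAddCommGroup E] [NormedSpace ℝ E]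
  [NormedAddCommGroup F] [NormedSpace ℝ F]

theorem image_closedBall_subset_vadd_smul_cthickening {f : E → F} {L : E →L[ℝ] F} {x : E}
    {r η : ℝ} (hr : 0 < r) (hη : 0 ≤ η)
    (hf : ∀ y ∈ closedBall x r, ‖f y - f x - L (y - x)‖ ≤ η * ‖y - x‖) :
    f '' closedBall x r ⊆ f x +ᵥ r • cthickening η (L '' closedBall 0 1) := by
  rintro _ ⟨y, hy, rfl⟩
  have hyx : ‖y - x‖ ≤ r := by rwa [← dist_eq_norm]
  rw [mem_vadd_set_iff_neg_vadd_mem, mem_smul_set_iff_inv_smul_mem₀ hr.ne']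
  have hmem : L (r⁻¹ • (y - x)) ∈ L '' closedBall 0 1 := by
    refine mem_image_of_mem L ?_
    rw [mem_closedBall_zero_iff, norm_smul, norm_inv, Real.norm_of_nonneg hr.le]
    exact inv_mul_le_one_of_le₀ hyx hr.le
  refine mem_cthickening_of_dist_le _ _ _ _ hmem ?_
  have hrescale : r⁻¹ • (-f x +ᵥ f y) - L (r⁻¹ • (y - x)) = r⁻¹ • (f y - f x - L (y - x)) := by
    simp only [vadd_eq_add, map_smul]
    module
  rw [dist_eq_norm, hrescale, norm_smul, norm_inv, Real.norm_of_nonneg hr.le]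
  calc r⁻¹ * ‖f y - f x - L (y - x)‖ ≤ r⁻¹ * (η * r) := by
        gcongr
        exact (hf y hy).trans (by gcongr)
    _ = η := by field_simp

theorem addHaar_closure_image_closedBall_le [FiniteDimensional ℝ F] [MeasurableSpace F]
    [BorelSpace F] (μ : Measure F) [μ.IsAddHaarMeasure] {f : E → F} {L : E →L[ℝ] F} {x : E}
    {r η : ℝ} (hr : 0 < r) (hη : 0 ≤ η)
    (hf : ∀ y ∈ closedBall x r, ‖f y - f x - L (y - x)‖ ≤ η * ‖y - x‖) :
    μ (closure (f '' closedBall x r)) ≤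
      ENNReal.ofReal (r ^ Module.finrank ℝ F) * μ (cthickening η (L '' closedBall 0 1)) := by
  have hclosed : IsClosed (f x +ᵥ r • cthickening η (L '' closedBall 0 1)) :=
    (isClosed_cthickening.smul₀ r).vadd (f x)
  calc μ (closure (f '' closedBall x r))
      ≤ μ (f x +ᵥ r • cthickening η (L '' closedBall 0 1)) :=
        measure_mono <| closure_minimal
          (image_closedBall_subset_vadd_smul_cthickening hr hη hf) hclosed
    _ = _ := by rw [measure_vadd, Measure.addHaar_smul, abs_of_pos (pow_pos hr _)]

end AffineApprox

theorem exists_pos_addHaar_cthickening_image_closedBall_lt {E : Type*}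
    [NormedAddCommGroup E] [NormedSpace ℝ E] [FiniteDimensional ℝ E] [MeasurableSpace E]
    [BorelSpace E] (μ : Measure E) [μ.IsAddHaarMeasure] {L : E →L[ℝ] E}
    (hL : LinearMap.det (L : E →ₗ[ℝ] E) = 0) {c : ENNReal} (hc : 0 < c) :
    ∃ η > 0, μ (cthickening η (L '' closedBall 0 1)) < c := by
  have hK : IsCompact (L '' closedBall 0 1) := (isCompact_closedBall 0 1).image L.continuous
  have hnull : μ (L '' closedBall 0 1) = 0 := by
    simp [Measure.addHaar_image_continuousLinearMap, hL]
  have hsmall : ∀ᶠ η in 𝓝[>] 0, μ (cthickening η (L '' closedBall 0 1)) < c :=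
    (tendsto_measure_cthickening_of_isCompact hK).eventually (gt_mem_nhds (hnull ▸ hc))
      |>.filter_mono nhdsWithin_le_nhds
  exact (hsmall.and self_mem_nhdsWithin).exists.imp fun η h => ⟨h.2, h.1⟩

/-- Sard-type lemma at a point of strong differentiability with singular derivative:
the images of small cubes (sup-norm closed balls) around the point have small outer
Jordan content compared to the cubes' volume. -/
theorem sard_lemma_pointwise {m : ℕ} (A : Set (Fin m → ℝ)) (u : Fin m → ℝ)
    (G : (Fin m → ℝ) → (Fin m → ℝ)) (A' : (Fin m → ℝ) →L[ℝ] (Fin m → ℝ))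
    (hG : HasStrongDerivAt G A' A u)
    (hsing : LinearMap.det (A' : (Fin m → ℝ) →ₗ[ℝ] (Fin m → ℝ)) = 0) :
    ∀ ε > (0 : ℝ), ∃ δ > (0 : ℝ), ball u δ ⊆ A ∧
      ∀ (x : Fin m → ℝ) (r : ℝ), 0 < r → closedBall x r ⊆ ball u δ →
        jContentOuter (G '' closedBall x r) ≤ ε * (volume (closedBall x r)).toReal := by
  intro ε hε
  obtain ⟨η, hη, hK⟩ := exists_pos_addHaar_cthickening_image_closedBall_lt volume hsing
    (c := ENNReal.ofReal (ε * 2 ^ m)) (by positivity)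
  obtain ⟨δ, hδ, hδA, hGδ⟩ := hG η hη
  refine ⟨δ, hδ, hδA, fun x r hr hsub => ?_⟩
  have hbound := addHaar_closure_image_closedBall_le volume hr hη.le
    fun y hy => hGδ y (hsub hy) x (hsub (mem_closedBall_self hr.le))
  rw [Module.finrank_fin_fun] at hbound
  rw [jContentOuter, Real.volume_pi_closedBall x hr.le, Fintype.card_fin,
    ENNReal.toReal_ofReal (by positivity)]
  calc (volume (closure (G '' closedBall x r))).toReal
      ≤ (ENNReal.ofReal (r ^ m) * ENNReal.ofReal (ε * 2 ^ m)).toReal :=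
        ENNReal.toReal_mono (by finiteness) (hbound.trans (by gcongr))
    _ = ε * (2 * r) ^ m := by
        rw [← ENNReal.ofReal_mul (by positivity), ENNReal.toReal_ofReal (by positivity)]
        ring
end

section
/- Let Q ⊆ ℝ^m be a cube and Φ a real-valued function on the set of subcubes of Q that is additive (Φ(H) = Σ_{J∈𝒜} Φ(J) for every cube-partition 𝒜 of a subcube H), Lipschitz (|Φ(I)| ≤ L·V(I) for all subcubes I), and satisfies Φ'(u) = 0 for almost every interior point u of Q (i.e., Φ(I)/V(I) → 0 as cubes I containing u shrink to u). Then Φ is identically 0. -/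
/-!
Cut a subcube `I` into `K^m` congruent subcubes. Those on which `|Φ| ≤ ω V` contribute at most
`ω V(I)` to `|Φ(I)|`, and by the Lipschitz bound the remaining "bad" ones contribute at most `L`
times their total volume. A point where `Φ' = 0` lies in a bad subcube for only finitely many `K`,
so by dominated convergence the total volume of the bad subcubes tends to `0` as `K → ∞`. Hence
`|Φ(I)| ≤ ω V(I)` for every `ω > 0`.
-/

open Set Metric MeasureTheory Filter Topology

noncomputable def subcubeCenter {m : ℕ} (c : Fin m → ℝ) (r : ℝ) (K : ℕ) (v : Fin m → Fin K) :
    Fin m → ℝ :=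
  fun i => c i - r + (2 * (v i : ℝ) + 1) * (r / K)

lemma exists_fin_le_le_succ {s : ℝ} {K : ℕ} (hs : s ∈ Icc (0 : ℝ) K) (hK : 0 < K) :
    ∃ j : Fin K, (j : ℝ) ≤ s ∧ s ≤ j + 1 := by
  rcases le_or_gt ⌊s⌋₊ (K - 1) with h | h
  · exact ⟨⟨⌊s⌋₊, by omega⟩, Nat.floor_le hs.1, (Nat.lt_floor_add_one s).le⟩
  · refine ⟨⟨K - 1, by omega⟩, ?_, ?_⟩
    · have : ((K - 1 : ℕ) : ℝ) < ⌊s⌋₊ := by exact_mod_cast h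
      exact this.le.trans (Nat.floor_le hs.1)
    · simpa [Nat.cast_sub hK] using hs.2

lemma iUnion_closedBall_subcubeCenter {m : ℕ} (c : Fin m → ℝ) {r : ℝ} (hr : 0 < r) {K : ℕ}
    (hK : 0 < K) :
    ⋃ v : Fin m → Fin K, closedBall (subcubeCenter c r K v) (r / K) = closedBall c r := by
  have hρ : 0 < r / K := by positivity
  have hKρ : (K : ℝ) * (r / K) = r := by field_simp
  ext x
  simp only [mem_iUnion, mem_closedBall, dist_pi_le_iff hρ.le, dist_pi_le_iff hr.le,
    Real.dist_eq, abs_le, subcubeCenter]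
  constructor
  · rintro ⟨v, hv⟩ i
    have hvi : (v i : ℝ) + 1 ≤ K := by exact_mod_cast (v i).isLt
    have := hv i
    constructor <;> nlinarith [mul_le_mul_of_nonneg_right hvi hρ.le]
  · intro hx
    -- the coordinate `x i`, measured from the left face in units of the subcube side `2r/K`
    have hcoord : ∀ i, ∃ j : Fin K, (j : ℝ) ≤ (x i - (c i - r)) / (2 * (r / K)) ∧
        (x i - (c i - r)) / (2 * (r / K)) ≤ j + 1 := fun i =>
      exists_fin_le_le_succ ⟨div_nonneg (by linarith [hx i]) (by positivity),
        (div_le_iff₀ (by positivity)).2 (by nlinarith [hx i])⟩ hK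
    choose v hv using hcoord
    refine ⟨v, fun i => ?_⟩
    obtain ⟨h₁, h₂⟩ := hv i
    rw [le_div_iff₀ (by positivity)] at h₁
    rw [div_le_iff₀ (by positivity)] at h₂
    constructor <;> nlinarith

lemma closedBall_subcubeCenter_subset {m : ℕ} (c : Fin m → ℝ) {r : ℝ} (hr : 0 < r) {K : ℕ}
    (hK : 0 < K) (v : Fin m → Fin K) :
    closedBall (subcubeCenter c r K v) (r / K) ⊆ closedBall c r :=
  iUnion_closedBall_subcubeCenter c hr hK ▸
    subset_iUnion (fun w => closedBall (subcubeCenter c r K w) (r / K)) v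

lemma disjoint_ball_subcubeCenter {m : ℕ} (c : Fin m → ℝ) {r : ℝ} (hr : 0 ≤ r) {K : ℕ}
    {v w : Fin m → Fin K} (hvw : v ≠ w) :
    Disjoint (ball (subcubeCenter c r K v) (r / K)) (ball (subcubeCenter c r K w) (r / K)) := by
  obtain ⟨i, hi⟩ := Function.ne_iff.1 hvw
  refine ball_disjoint_ball ((?_ : r / K + r / K ≤ dist (subcubeCenter c r K v i)
    (subcubeCenter c r K w i)).trans (dist_le_pi_dist _ _ i))
  have hsep : (1 : ℝ) ≤ |(v i : ℝ) - w i| := by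
    have : (v i : ℤ) ≠ w i := by exact_mod_cast Fin.val_injective.ne hi
    exact_mod_cast Int.one_le_abs (sub_ne_zero.2 this)
  rw [Real.dist_eq, subcubeCenter, subcubeCenter, show ∀ a b : ℝ,
    c i - r + (2 * a + 1) * (r / K) - (c i - r + (2 * b + 1) * (r / K)) = (a - b) * (2 * (r / K))
    from fun a b => by ring, abs_mul, abs_of_nonneg (a := 2 * (r / K)) (by positivity)]
  nlinarith [div_nonneg hr (Nat.cast_nonneg K : (0:ℝ) ≤ K)]

def IsCubeAdditiveOn {m : ℕ} (Q : Set (Fin m → ℝ)) (Φ : (Fin m → ℝ) → ℝ → ℝ) : Prop :=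
  ∀ (c : Fin m → ℝ) (r : ℝ), 0 < r → closedBall c r ⊆ Q →
    ∀ (n : ℕ) (cs : Fin n → (Fin m → ℝ)) (rs : Fin n → ℝ),
      (∀ i, 0 < rs i) →
      (⋃ i, closedBall (cs i) (rs i)) = closedBall c r →
      (∀ i j, i ≠ j →
        interior (closedBall (cs i) (rs i)) ∩ interior (closedBall (cs j) (rs j)) = ∅) →
      Φ c r = ∑ i, Φ (cs i) (rs i)

lemma IsCubeAdditiveOn.eq_sum_subcubes {m : ℕ} {Q : Set (Fin m → ℝ)}
    {Φ : (Fin m → ℝ) → ℝ → ℝ} (hΦ : IsCubeAdditiveOn Q Φ) {c : Fin m → ℝ} {r : ℝ} (hr : 0 < r)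
    (hcQ : closedBall c r ⊆ Q) {K : ℕ} (hK : 0 < K) :
    Φ c r = ∑ v : Fin m → Fin K, Φ (subcubeCenter c r K v) (r / K) := by
  have hρ : 0 < r / K := by positivity
  let e := (Fintype.equivFin (Fin m → Fin K)).symm
  rw [hΦ c r hr hcQ _ (fun i => subcubeCenter c r K (e i)) (fun _ => r / K) (fun _ => hρ),
    e.sum_comp (fun v => Φ (subcubeCenter c r K v) (r / K))]
  · rw [e.surjective.iUnion_comp (fun v => closedBall (subcubeCenter c r K v) (r / K))]
    exact iUnion_closedBall_subcubeCenter c hr hK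
  · intro i j hij
    rw [interior_closedBall _ hρ.ne', interior_closedBall _ hρ.ne', ← disjoint_iff_inter_eq_empty]
    exact disjoint_ball_subcubeCenter c hr.le (e.injective.ne hij)

def HasCubeDerivZeroAt {m : ℕ} (Φ : (Fin m → ℝ) → ℝ → ℝ) (u : Fin m → ℝ) : Prop :=
  ∀ ω > (0 : ℝ), ∃ δ > (0 : ℝ), ∀ (c : Fin m → ℝ) (r : ℝ), 0 < r → u ∈ closedBall c r →
    closedBall c r ⊆ ball u δ → |Φ c r / (2 * r) ^ m| < ω

section BadSubcubes

variable {m : ℕ} (Φ : (Fin m → ℝ) → ℝ → ℝ) (ω : ℝ) (c : Fin m → ℝ) (r : ℝ) (K : ℕ)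

open Classical in
noncomputable def badSubcubes : Finset (Fin m → Fin K) :=
  {v | ω * (2 * (r / K)) ^ m < |Φ (subcubeCenter c r K v) (r / K)|}

/-- Open subcubes are used so that the pieces are disjoint. -/
def badSet : Set (Fin m → ℝ) :=
  ⋃ v ∈ badSubcubes Φ ω c r K, ball (subcubeCenter c r K v) (r / K)

variable {Φ ω c r K}

lemma measureReal_badSet (hr : 0 < r) (hK : 0 < K) :
    volume.real (badSet Φ ω c r K) = (badSubcubes Φ ω c r K).card * (2 * (r / K)) ^ m := by
  rw [badSet, measureReal_biUnion_finset
    (fun v _ w _ hvw => disjoint_ball_subcubeCenter c hr.le hvw) (fun _ _ => measurableSet_ball)]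
  have hρ : 0 < r / K := by positivity
  simp only [measureReal_def, Real.volume_pi_ball _ hρ, Fintype.card_fin,
    ENNReal.toReal_ofReal (by positivity : (0 : ℝ) ≤ (2 * (r / K)) ^ m), Finset.sum_const,
    nsmul_eq_mul]

lemma abs_le_of_eq_sum_subcubes (hr : 0 < r) (hK : 0 < K) (hω : 0 ≤ ω) {L : ℝ}
    (hsum : Φ c r = ∑ v : Fin m → Fin K, Φ (subcubeCenter c r K v) (r / K))
    (hLip : ∀ v, |Φ (subcubeCenter c r K v) (r / K)| ≤ L * (2 * (r / K)) ^ m) :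
    |Φ c r| ≤ ω * (2 * r) ^ m + L * volume.real (badSet Φ ω c r K) := by
  classical
  set f := fun v => |Φ (subcubeCenter c r K v) (r / K)|
  have hgood : ∑ v ∈ {v | ¬ ω * (2 * (r / K)) ^ m < f v}, f v ≤ ω * (2 * r) ^ m :=
    calc ∑ v ∈ {v | ¬ ω * (2 * (r / K)) ^ m < f v}, f v
        ≤ ∑ _v : Fin m → Fin K, ω * (2 * (r / K)) ^ m :=
          Finset.sum_le_sum_of_subset_of_nonneg (Finset.filter_subset _ _)
            (fun v _ _ => by positivity) |>.trans' <| Finset.sum_le_sum fun v hv =>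
              not_lt.1 (Finset.mem_filter.1 hv).2
      _ = ω * (2 * r) ^ m := by
        rw [Finset.sum_const, Finset.card_univ, Fintype.card_fun, Fintype.card_fin,
          Fintype.card_fin, nsmul_eq_mul, Nat.cast_pow, mul_left_comm, ← mul_pow]
        congr 2
        field_simp
  have hbad : ∑ v ∈ badSubcubes Φ ω c r K, f v ≤ L * volume.real (badSet Φ ω c r K) := by
    rw [measureReal_badSet hr hK]
    calc ∑ v ∈ badSubcubes Φ ω c r K, f v
        ≤ ∑ _v ∈ badSubcubes Φ ω c r K, L * (2 * (r / K)) ^ m := Finset.sum_le_sum fun v _ => hLip v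
      _ = _ := by rw [Finset.sum_const, nsmul_eq_mul]; ring
  calc |Φ c r| ≤ ∑ v, f v := hsum ▸ Finset.abs_sum_le_sum_abs _ _
    _ = ∑ v ∈ badSubcubes Φ ω c r K, f v + ∑ v ∈ {v | ¬ ω * (2 * (r / K)) ^ m < f v}, f v :=
        (Finset.sum_filter_add_sum_filter_not _ _ _).symm
    _ ≤ _ := by linarith

lemma badSet_subset_closedBall (hr : 0 < r) (hK : 0 < K) :
    badSet Φ ω c r K ⊆ closedBall c r :=
  iUnion₂_subset fun v _ => ball_subset_closedBall.trans (closedBall_subcubeCenter_subset c hr hK v)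

lemma eventually_notMem_badSet {u : Fin m → ℝ} (hω : 0 < ω) (hu : HasCubeDerivZeroAt Φ u) :
    ∀ᶠ K in atTop, u ∉ badSet Φ ω c r K := by
  obtain ⟨δ, hδ, hsmall⟩ := hu ω hω
  have hside : ∀ᶠ K : ℕ in atTop, 2 * (r / K) < δ := by
    simpa only [mul_div_assoc] using
      (tendsto_const_div_atTop_nhds_zero_nat (2 * r)).eventually (gt_mem_nhds hδ)
  filter_upwards [hside] with K hK hu
  simp only [badSet, mem_iUnion] at hu
  obtain ⟨v, hv, huv⟩ := hu
  have hρ : 0 < r / K := pos_of_mem_ball huv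
  have hsub : closedBall (subcubeCenter c r K v) (r / K) ⊆ ball u δ :=
    closedBall_subset_ball' (by rw [dist_comm]; linarith [mem_ball.1 huv])
  have hlt := hsmall _ _ hρ (ball_subset_closedBall huv) hsub
  rw [abs_div, abs_of_pos (a := (2 * (r / K)) ^ m) (by positivity), div_lt_iff₀ (by positivity)]
    at hlt
  exact (Finset.mem_filter.1 hv).2.not_gt hlt

lemma tendsto_measureReal_badSet (hr : 0 < r) (hω : 0 < ω)
    (hΦ : ∀ᵐ u, u ∈ closedBall c r → HasCubeDerivZeroAt Φ u) :
    Tendsto (fun K => volume.real (badSet Φ ω c r K)) atTop (𝓝 0) := by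
  have hlim : Tendsto (fun K => volume (badSet Φ ω c r K)) atTop
      (𝓝 (volume (∅ : Set (Fin m → ℝ)))) := by
    refine tendsto_measure_of_ae_tendsto_indicator atTop MeasurableSet.empty
      (fun K => (isOpen_biUnion fun _ _ => isOpen_ball).measurableSet) measurableSet_closedBall
      measure_closedBall_lt_top.ne
      ((eventually_gt_atTop 0).mono fun K hK => badSet_subset_closedBall hr hK) ?_
    filter_upwards [hΦ] with u hu
    by_cases huc : u ∈ closedBall c r
    · simpa using eventually_notMem_badSet hω (hu huc)
    · exact (eventually_gt_atTop 0).mono fun K hK =>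
        iff_of_false (fun h => huc (badSet_subset_closedBall hr hK h)) (notMem_empty u)
  rw [measure_empty] at hlim
  exact (ENNReal.tendsto_toReal ENNReal.zero_ne_top).comp hlim

lemma eq_zero_of_ae_hasCubeDerivZeroAt (hr : 0 < r) {L : ℝ}
    (hsum : ∀ K : ℕ, 0 < K → Φ c r = ∑ v : Fin m → Fin K, Φ (subcubeCenter c r K v) (r / K))
    (hLip : ∀ (c' : Fin m → ℝ) (r' : ℝ), 0 < r' → closedBall c' r' ⊆ closedBall c r →
      |Φ c' r'| ≤ L * (2 * r') ^ m)
    (hΦ : ∀ᵐ u, u ∈ closedBall c r → HasCubeDerivZeroAt Φ u) :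
    Φ c r = 0 := by
  have hvol : 0 < (2 * r) ^ m := by positivity
  refine abs_eq_zero.1 (le_antisymm (le_of_forall_pos_le_add fun ε hε => ?_) (abs_nonneg _))
  set ω := ε / (2 * r) ^ m
  have hω : 0 < ω := by positivity
  have hbound : ∀ᶠ K in atTop, |Φ c r| ≤ ω * (2 * r) ^ m + L * volume.real (badSet Φ ω c r K) :=
    (eventually_gt_atTop 0).mono fun K hK => abs_le_of_eq_sum_subcubes hr hK hω.le (hsum K hK)
      fun v => hLip _ _ (by positivity) (closedBall_subcubeCenter_subset c hr hK v)
  have hlim := ((tendsto_measureReal_badSet hr hω hΦ).const_mul L).const_add (ω * (2 * r) ^ m)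
  have := ge_of_tendsto hlim hbound
  rwa [mul_zero, add_zero, div_mul_cancel₀ _ hvol.ne', ← zero_add ε] at this

end BadSubcubes

/-- An additive, Lipschitz cube-function whose derivative vanishes at almost every interior
point of the cube `Q = closedBall q R` (sup-norm, so closed balls are cubes) is identically
zero. A subcube is encoded by its center `c` and its radius `r`; its volume is `(2r)^m`
and `Φ c r` denotes the value of the cube-function on `closedBall c r`. -/
theorem additive_lipschitz_cube_function_zero {m : ℕ} (q : Fin m → ℝ) (R : ℝ) (hR : 0 < R)
    (Φ : (Fin m → ℝ) → ℝ → ℝ) (L : ℝ)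
    -- additivity over cube-partitions of subcubes:
    (hadd : ∀ (c : Fin m → ℝ) (r : ℝ), 0 < r → closedBall c r ⊆ closedBall q R →
      ∀ (n : ℕ) (cs : Fin n → (Fin m → ℝ)) (rs : Fin n → ℝ),
        (∀ i, 0 < rs i) →
        (⋃ i, closedBall (cs i) (rs i)) = closedBall c r →
        (∀ i j, i ≠ j →
          interior (closedBall (cs i) (rs i)) ∩ interior (closedBall (cs j) (rs j)) = ∅) →
        Φ c r = ∑ i, Φ (cs i) (rs i))
    -- Lipschitz property:
    (hLip : ∀ (c : Fin m → ℝ) (r : ℝ), 0 < r → closedBall c r ⊆ closedBall q R →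
      |Φ c r| ≤ L * (2 * r) ^ m)
    -- derivative zero at almost every interior point:
    (hderiv : ∃ N : Set (Fin m → ℝ), volume N = 0 ∧ ∀ u ∈ ball q R \ N,
      ∀ ω > (0 : ℝ), ∃ δ > (0 : ℝ), ball u δ ⊆ closedBall q R ∧
        ∀ (c : Fin m → ℝ) (r : ℝ), 0 < r → u ∈ closedBall c r → closedBall c r ⊆ ball u δ →
          |Φ c r / (2 * r) ^ m| < ω) :
    ∀ (c : Fin m → ℝ) (r : ℝ), 0 < r → closedBall c r ⊆ closedBall q R → Φ c r = 0 := by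
  intro c r hr hcQ
  obtain ⟨N, hN, hderivN⟩ := hderiv
  have hΦ : ∀ᵐ u, u ∈ closedBall c r → HasCubeDerivZeroAt Φ u := by
    filter_upwards [measure_eq_zero_iff_ae_notMem.1 hN,
      measure_eq_zero_iff_ae_notMem.1 (Measure.addHaar_sphere_of_ne_zero volume q hR.ne')]
      with u huN huS huc ω hω
    have huQ : u ∈ ball q R :=
      mem_ball.2 <| (mem_closedBall.1 (hcQ huc)).lt_of_ne fun h => huS (mem_sphere.2 h)
    obtain ⟨δ, hδ, -, hsmall⟩ := hderivN u ⟨huQ, huN⟩ ω hω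
    exact ⟨δ, hδ, hsmall⟩
  exact eq_zero_of_ae_hasCubeDerivZeroAt hr
    (fun K hK => IsCubeAdditiveOn.eq_sum_subcubes hadd hr hcQ hK)
    (fun c' r' hr' hsub => hLip c' r' hr' (hsub.trans hcQ)) hΦ
end

section
/- If A ⊆ ℝ^m is Jordan measurable and G : A → ℝ^m is a Lipschitz map that is strongly differentiable at almost all interior points of A, then G(A) is Jordan measurable. -/
open Set Metric MeasureTheory

/-- A set is Jordan measurable if it is bounded and its boundary is a null set. -/
def JordanMeasurable {m : ℕ} (X : Set (Fin m → ℝ)) : Prop :=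
  Bornology.IsBounded X ∧ volume (frontier X) = 0

open Filter Topology

/-!
A point of the frontier of `G '' A` is the image, under a Lipschitz extension of `G`, of a point
of `closure A`. It comes from the frontier of `A`, from the null set where `G` may fail to be
strongly differentiable, or from an interior point where the strong derivative is singular:
at an interior point with invertible strong derivative the inverse function theorem makes `G`
open there, so its image is an interior point of `G '' A`. The first two pieces are images of null
sets under Lipschitz maps and the last one is null by Sard's lemma, so the frontier of `G '' A`
is null.
-/

section StrongDeriv

variable {m n : ℕ} {f : (Fin m → ℝ) → (Fin n → ℝ)} {B : (Fin m → ℝ) →L[ℝ] (Fin n → ℝ)}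
  {s : Set (Fin m → ℝ)} {u : Fin m → ℝ}

theorem HasStrongDerivAt.mem_nhds (h : HasStrongDerivAt f B s u) : s ∈ 𝓝 u := by
  obtain ⟨δ, hδ, hball, -⟩ := h 1 one_pos
  exact mem_of_superset (ball_mem_nhds u hδ) hball

theorem HasStrongDerivAt.hasStrictFDerivAt (h : HasStrongDerivAt f B s u) :
    HasStrictFDerivAt f B u := by
  refine .of_isLittleO (Asymptotics.isLittleO_iff.2 fun ε hε ↦ ?_)
  obtain ⟨δ, hδ, -, hδε⟩ := h ε hε
  filter_upwards [prod_mem_nhds (ball_mem_nhds u hδ) (ball_mem_nhds u hδ)] with p hp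
  exact hδε p.1 hp.1 p.2 hp.2

end StrongDeriv

section Image

variable {m : ℕ}

theorem HasStrongDerivAt.mem_interior_image_of_det_ne_zero
    {f : (Fin m → ℝ) → (Fin m → ℝ)} {B : (Fin m → ℝ) →L[ℝ] (Fin m → ℝ)} {s : Set (Fin m → ℝ)}
    {u : Fin m → ℝ} (h : HasStrongDerivAt f B s u) (hB : B.det ≠ 0) :
    f u ∈ interior (f '' s) := by
  have hequiv : HasStrictFDerivAt f (B.toContinuousLinearEquivOfDetNeZero hB : _ →L[ℝ] _) u := by
    simpa only [ContinuousLinearMap.coe_toContinuousLinearEquivOfDetNeZero] using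
      h.hasStrictFDerivAt
  rw [mem_interior_iff_mem_nhds, ← hequiv.map_nhds_eq_of_equiv]
  exact image_mem_map h.mem_nhds

def strongCriticalPoints (f : (Fin m → ℝ) → (Fin m → ℝ)) (s : Set (Fin m → ℝ)) :
    Set (Fin m → ℝ) :=
  {u | ∃ B : (Fin m → ℝ) →L[ℝ] (Fin m → ℝ), HasStrongDerivAt f B s u ∧ B.det = 0}

theorem volume_image_strongCriticalPoints (f : (Fin m → ℝ) → (Fin m → ℝ))
    (s : Set (Fin m → ℝ)) : volume (f '' strongCriticalPoints f s) = 0 := by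
  choose! B hB hdet using fun u (hu : u ∈ strongCriticalPoints f s) ↦ hu
  exact addHaar_image_eq_zero_of_det_fderivWithin_eq_zero volume
    (fun u hu ↦ (hB u hu).hasStrictFDerivAt.hasFDerivAt.hasFDerivWithinAt) hdet

theorem LipschitzOnWith.volume_image_null {K : NNReal} {f : (Fin m → ℝ) → (Fin m → ℝ)}
    {s : Set (Fin m → ℝ)} (hf : LipschitzOnWith K f s) (hs : volume s = 0) :
    volume (f '' s) = 0 := by
  have hvol : (volume : Measure (Fin m → ℝ)) = μH[m] := by
    rw [← hausdorffMeasure_pi_real, Fintype.card_fin]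
  rw [hvol] at hs ⊢
  simpa [hs] using hf.hausdorffMeasure_image_le (d := m) (Nat.cast_nonneg m)

theorem frontier_image_subset {A N : Set (Fin m → ℝ)} {G F : (Fin m → ℝ) → (Fin m → ℝ)}
    (hA : Bornology.IsBounded A) (hF : Continuous F) (hGF : EqOn G F A)
    (hdiff : ∀ x ∈ interior A \ N, ∃ B, HasStrongDerivAt G B A x) :
    frontier (G '' A) ⊆ F '' frontier A ∪ G '' (A ∩ N) ∪ G '' strongCriticalPoints G A := by
  intro y hy
  have hclosure : closure (G '' A) = F '' closure A := by
    rw [image_congr hGF, image_closure_of_isCompact hA.isCompact_closure hF.continuousOn]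
  obtain ⟨x, hx, rfl⟩ : y ∈ F '' closure A := hclosure ▸ hy.1
  by_cases hxA : x ∈ interior A
  swap
  · exact .inl (.inl ⟨x, ⟨hx, hxA⟩, rfl⟩)
  rw [← hGF (interior_subset hxA)] at hy ⊢
  by_cases hxN : x ∈ N
  · exact .inl (.inr ⟨x, ⟨interior_subset hxA, hxN⟩, rfl⟩)
  obtain ⟨B, hB⟩ := hdiff x ⟨hxA, hxN⟩
  by_cases hdet : B.det = 0
  · exact .inr ⟨x, ⟨B, hB, hdet⟩, rfl⟩
  · exact absurd (hB.mem_interior_image_of_det_ne_zero hdet) hy.2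

end Image

/-- The image of a Jordan measurable set under a Lipschitz map that is strongly
differentiable at almost every interior point is Jordan measurable. -/
theorem image_jordanMeasurable {m : ℕ} (A : Set (Fin m → ℝ)) (hA : JordanMeasurable A)
    (G : (Fin m → ℝ) → (Fin m → ℝ)) (L : NNReal) (hG : LipschitzOnWith L G A)
    (hdiff : ∃ N : Set (Fin m → ℝ), volume N = 0 ∧ ∀ x ∈ interior A \ N,
      ∃ B : (Fin m → ℝ) →L[ℝ] (Fin m → ℝ), HasStrongDerivAt G B A x) :
    JordanMeasurable (G '' A) := by
  obtain ⟨hA_bdd, hA_frontier⟩ := hA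
  obtain ⟨N, hN, hdiff⟩ := hdiff
  obtain ⟨F, hF, hGF⟩ := hG.extend_pi
  refine ⟨image_congr hGF ▸ hF.isBounded_image hA_bdd, ?_⟩
  refine measure_mono_null (frontier_image_subset hA_bdd hF.continuous hGF hdiff) ?_
  refine measure_union_null (measure_union_null ?_ ?_) (volume_image_strongCriticalPoints G A)
  · exact hF.lipschitzOnWith.volume_image_null hA_frontier
  · exact (hG.mono inter_subset_left).volume_image_null (measure_mono_null inter_subset_right hN)
end

section
/- Let X ⊆ ℝ^m be Jordan measurable, K ⊆ X a Lebesgue null set, and G : X → ℝ^m a Lipschitz map injective on int X ∖ K. Then for any two non-overlapping Jordan measurable sets A, B ⊆ X, the images G(A) and G(B) are non-overlapping (their interiors are disjoint). -/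
open Set Metric MeasureTheory

/-!
If `y = G a = G b` with `a ∈ interior A \ K` and `b ∈ interior B \ K`, then both points lie in
`interior X \ K`, so injectivity gives `a = b ∈ interior A ∩ interior B = ∅`. Hence `G(A) ∩ G(B)`
lies in the image of `(A \ interior A) ∪ (B \ interior B) ∪ K`, a null subset of `X`, and Lipschitz
maps preserve null sets. So `interior (G A) ∩ interior (G B)` is open and null, hence empty.
-/

theorem LipschitzOnWith.volume_image_eq_zero {ι : Type*} [Fintype ι] {f : (ι → ℝ) → ι → ℝ}
    {K : NNReal} {s : Set (ι → ℝ)} (hf : LipschitzOnWith K f s) (hs : volume s = 0) :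
    volume (f '' s) = 0 := by
  rw [← hausdorffMeasure_pi_real] at hs ⊢
  refine le_antisymm ?_ bot_le
  calc μH[(Fintype.card ι : ℝ)] (f '' s)
      ≤ (K : ENNReal) ^ (Fintype.card ι : ℝ) * μH[(Fintype.card ι : ℝ)] s :=
        hf.hausdorffMeasure_image_le (Nat.cast_nonneg _)
    _ = 0 := by rw [hs, mul_zero]

theorem Set.InjOn.image_inter_image_subset {α β : Type*} {f : α → β} {u s t : Set α}
    (hf : InjOn f u) : f '' s ∩ f '' t ⊆ f '' (s ∩ t ∪ s \ u ∪ t \ u) := by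
  rintro _ ⟨⟨a, ha, rfl⟩, ⟨b, hb, hba⟩⟩
  by_cases hau : a ∈ u
  · by_cases hbu : b ∈ u
    · exact ⟨a, Or.inl (Or.inl ⟨ha, hf hbu hau hba ▸ hb⟩), rfl⟩
    · exact ⟨b, Or.inr ⟨hb, hbu⟩, hba⟩
  · exact ⟨a, Or.inl (Or.inr ⟨ha, hau⟩), rfl⟩

theorem diff_interior_subset_frontier {α : Type*} [TopologicalSpace α] (s : Set α) :
    s \ interior s ⊆ frontier s :=
  closure_sdiff_interior s ▸ sdiff_subset_sdiff_left subset_closure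

theorem inter_union_diff_subset_of_interior_inter_eq_empty {α : Type*} [TopologicalSpace α]
    {X K A B : Set α} (hAX : A ⊆ X) (hBX : B ⊆ X) (hAB : interior A ∩ interior B = ∅) :
    A ∩ B ∪ A \ (interior X \ K) ∪ B \ (interior X \ K) ⊆
      A \ interior A ∪ B \ interior B ∪ K := by
  have hA := interior_mono hAX
  have hB := interior_mono hBX
  rintro x (((⟨xA, xB⟩ | ⟨xA, xXK⟩) | ⟨xB, xXK⟩))
  · by_cases xiA : x ∈ interior A
    · exact Or.inl (Or.inr ⟨xB, fun xiB => (hAB ▸ ⟨xiA, xiB⟩ : x ∈ (∅ : Set α))⟩)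
    · exact Or.inl (Or.inl ⟨xA, xiA⟩)
  · by_cases xK : x ∈ K
    · exact Or.inr xK
    · exact Or.inl (Or.inl ⟨xA, fun xiA => xXK ⟨hA xiA, xK⟩⟩)
  · by_cases xK : x ∈ K
    · exact Or.inr xK
    · exact Or.inl (Or.inr ⟨xB, fun xiB => xXK ⟨hB xiB, xK⟩⟩)

theorem volume_image_inter_image_eq_zero {ι : Type*} [Fintype ι] {X K A B : Set (ι → ℝ)}
    {G : (ι → ℝ) → ι → ℝ} {L : NNReal} (hKX : K ⊆ X) (hK : volume K = 0)
    (hG : LipschitzOnWith L G X) (hinj : InjOn G (interior X \ K))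
    (hAX : A ⊆ X) (hA : volume (frontier A) = 0) (hBX : B ⊆ X) (hB : volume (frontier B) = 0)
    (hAB : interior A ∩ interior B = ∅) : volume (G '' A ∩ G '' B) = 0 := by
  set N := A \ interior A ∪ B \ interior B ∪ K
  have hNX : N ⊆ X :=
    union_subset (union_subset (sdiff_subset.trans hAX) (sdiff_subset.trans hBX)) hKX
  have hN : volume N = 0 :=
    measure_union_null (measure_union_null (measure_mono_null (diff_interior_subset_frontier A) hA)
      (measure_mono_null (diff_interior_subset_frontier B) hB)) hK
  refine measure_mono_null ?_ ((hG.mono hNX).volume_image_eq_zero hN)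
  exact hinj.image_inter_image_subset.trans
    (image_mono (inter_union_diff_subset_of_interior_inter_eq_empty hAX hBX hAB))

theorem images_nonoverlapping_general {m : ℕ} (X K : Set (Fin m → ℝ))
    (hKX : K ⊆ X) (hK : volume K = 0)
    (G : (Fin m → ℝ) → (Fin m → ℝ)) (L : NNReal) (hG : LipschitzOnWith L G X)
    (hinj : Set.InjOn G (interior X \ K)) :
    ∀ A B : Set (Fin m → ℝ), JordanMeasurable A → A ⊆ X → JordanMeasurable B → B ⊆ X →
      interior A ∩ interior B = ∅ → interior (G '' A) ∩ interior (G '' B) = ∅ := by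
  intro A B hA hAX hB hBX hAB
  rw [← interior_inter]
  exact volume.interior_eq_empty_of_null
    (volume_image_inter_image_eq_zero hKX hK hG hinj hAX hA.2 hBX hB.2 hAB)

/-- Images of non-overlapping Jordan measurable sets under a Lipschitz map, injective off
a null set, are non-overlapping. -/
theorem images_nonoverlapping {m : ℕ} (X K : Set (Fin m → ℝ)) (hX : JordanMeasurable X)
    (hKX : K ⊆ X) (hK : volume K = 0)
    (G : (Fin m → ℝ) → (Fin m → ℝ)) (L : NNReal) (hG : LipschitzOnWith L G X)
    (hinj : Set.InjOn G (interior X \ K)) :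
    ∀ A B : Set (Fin m → ℝ), JordanMeasurable A → A ⊆ X → JordanMeasurable B → B ⊆ X →
      interior A ∩ interior B = ∅ → interior (G '' A) ∩ interior (G '' B) = ∅ :=
  images_nonoverlapping_general X K hKX hK G L hG hinj
end

section
/- Let Q ⊆ ℝ^m be a cube and G : Q → ℝ^m a Lipschitz function, strongly differentiable at u ∈ int Q, and define the cube-function Φ(I) := V(G(I)) on subcubes I of Q. Then Φ is strongly differentiable at u with Φ'(u) = |det J_G(u)|; i.e., for every ω > 0 there is δ > 0 such that |V(G(I))/V(I) − |det J_G(u)|| < ω for every cube I ⊆ B(u,δ). -/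
/-!
Strong differentiability of `G` at `u` says that on small balls around `u` the map `G`
approximates `A` linearly with arbitrarily small constant. For such maps Mathlib's change of
variables estimates bound `vol (G '' s)` between `(|det A| - ε) vol s` and `(|det A| + ε) vol s`;
on a cube `s` the image is compact, so its outer Jordan content is its Lebesgue measure, and
dividing by `vol s = (2r)^m` gives the claim.
-/

open Set Metric MeasureTheory

open Filter Topology
open scoped NNReal ENNReal

theorem HasStrongDerivAt.exists_approximatesLinearOn_ball {m n : ℕ}
    {f : (Fin m → ℝ) → (Fin n → ℝ)} {A : (Fin m → ℝ) →L[ℝ] (Fin n → ℝ)}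
    {s : Set (Fin m → ℝ)} {u : Fin m → ℝ} (hf : HasStrongDerivAt f A s u) {c : ℝ≥0}
    (hc : 0 < c) : ∃ δ > (0 : ℝ), ball u δ ⊆ s ∧ ApproximatesLinearOn f A (ball u δ) c := by
  obtain ⟨δ, hδ, hball, hest⟩ := hf c hc
  exact ⟨δ, hδ, hball, fun x hx y hy => hest x hx y hy⟩

theorem IsCompact.jContentOuter_image {m : ℕ} {K : Set (Fin m → ℝ)} (hK : IsCompact K)
    {G : (Fin m → ℝ) → (Fin m → ℝ)} (hG : ContinuousOn G K) :
    jContentOuter (G '' K) = (volume (G '' K)).toReal := by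
  rw [jContentOuter, (hK.image_of_continuousOn hG).isClosed.closure_eq]

section AddHaar

variable {E : Type*} [NormedAddCommGroup E] [NormedSpace ℝ E] [MeasurableSpace E]
  [BorelSpace E] [FiniteDimensional ℝ E] (μ : Measure E) [μ.IsAddHaarMeasure]

theorem eventually_ofReal_mul_le_addHaar_image (A : E →L[ℝ] E) {a : ℝ} (ha : a < |A.det|) :
    ∀ᶠ δ in 𝓝[>] (0 : ℝ≥0), ∀ (s : Set E) (f : E → E),
      ApproximatesLinearOn f A s δ → ENNReal.ofReal a * μ s ≤ μ (f '' s) := by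
  rcases le_or_gt a 0 with ha₀ | ha₀
  · refine Eventually.of_forall fun δ s f _ => ?_
    simp [ENNReal.ofReal_of_nonpos ha₀]
  · exact mul_le_addHaar_image_of_lt_det μ A
      ((ENNReal.ofReal_lt_ofReal_iff_of_nonneg ha₀.le).2 ha)

theorem exists_abs_toReal_addHaar_image_sub_le (A : E →L[ℝ] E) {ε : ℝ} (hε : 0 < ε) :
    ∃ δ : ℝ≥0, 0 < δ ∧ ∀ (s : Set E) (f : E → E), ApproximatesLinearOn f A s δ → μ s ≠ ∞ →
      |(μ (f '' s)).toReal - |A.det| * (μ s).toReal| ≤ ε * (μ s).toReal := by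
  have hupper := addHaar_image_le_mul_of_det_lt μ A (m := (|A.det| + ε).toNNReal)
    ((ENNReal.ofReal_lt_ofReal_iff (by positivity)).2 (by linarith))
  have hlower := eventually_ofReal_mul_le_addHaar_image μ A (a := |A.det| - ε) (by linarith)
  obtain ⟨δ, ⟨hup, hlow⟩, hδ⟩ := ((hupper.and hlower).and self_mem_nhdsWithin).exists
  refine ⟨δ, hδ, fun s f hf hs => ?_⟩
  have himage : μ (f '' s) ≠ ∞ := ne_top_of_le_ne_top (by finiteness) (hup s f hf)
  have hup' : (μ (f '' s)).toReal ≤ (|A.det| + ε) * (μ s).toReal := by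
    simpa [ENNReal.toReal_mul, Real.coe_toNNReal _ (by positivity : 0 ≤ |A.det| + ε)]
      using ENNReal.toReal_mono (by finiteness) (hup s f hf)
  have hlow' : (|A.det| - ε) * (μ s).toReal ≤ (μ (f '' s)).toReal := by
    have := ENNReal.toReal_mono himage (hlow s f hf)
    rw [ENNReal.toReal_mul, ENNReal.toReal_ofReal'] at this
    exact (mul_le_mul_of_nonneg_right (le_max_left _ _) ENNReal.toReal_nonneg).trans this
  rw [abs_le]
  constructor <;> linarith

end AddHaar

theorem volume_image_cube_strong_deriv_general {m : ℕ} (q : Fin m → ℝ) (R : ℝ)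
    (G : (Fin m → ℝ) → (Fin m → ℝ)) (u : Fin m → ℝ)
    (A : (Fin m → ℝ) →L[ℝ] (Fin m → ℝ))
    (hA : HasStrongDerivAt G A (closedBall q R) u) :
    ∀ ω > (0 : ℝ), ∃ δ > (0 : ℝ), ball u δ ⊆ closedBall q R ∧
      ∀ (c : Fin m → ℝ) (r : ℝ), 0 < r → closedBall c r ⊆ ball u δ →
        |jContentOuter (G '' closedBall c r) / (2 * r) ^ m -
          abs (LinearMap.det (A : (Fin m → ℝ) →ₗ[ℝ] (Fin m → ℝ)))| < ω := by
  intro ω hω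
  obtain ⟨c₀, hc₀, hest⟩ := exists_abs_toReal_addHaar_image_sub_le volume A (half_pos hω)
  obtain ⟨δ, hδ, hball, happrox⟩ := hA.exists_approximatesLinearOn_ball hc₀
  refine ⟨δ, hδ, hball, fun c r hr hcr => ?_⟩
  have hcube := happrox.mono_set hcr
  have hvol : volume (closedBall c r) = ENNReal.ofReal ((2 * r) ^ m) := by
    rw [Real.volume_pi_closedBall c hr.le, Fintype.card_fin]
  have hV : 0 < (2 * r) ^ m := by positivity
  have key := hest _ _ hcube (hvol ▸ ENNReal.ofReal_ne_top)
  rw [hvol, ENNReal.toReal_ofReal hV.le] at key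
  rw [(isCompact_closedBall c r).jContentOuter_image hcube.continuousOn]
  calc _ = |(volume (G '' closedBall c r)).toReal - |A.det| * (2 * r) ^ m| / (2 * r) ^ m := by
        rw [← abs_of_pos hV, ← abs_div, abs_of_pos hV, sub_div, mul_div_cancel_right₀ _ hV.ne']
    _ ≤ ω / 2 := (div_le_iff₀ hV).2 key
    _ < ω := half_lt_self hω

/-- The cube-function `I ↦ V(G(I))` is strongly differentiable, with derivative
`|det J_G(u)|`, at any point `u` of strong differentiability of a Lipschitz map `G` in the
interior of the cube `Q = closedBall q R` (sup-norm balls are cubes; a subcube of radius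
`r` has volume `(2r)^m`). -/
theorem volume_image_cube_strong_deriv {m : ℕ} (q : Fin m → ℝ) (R : ℝ) (hR : 0 < R)
    (G : (Fin m → ℝ) → (Fin m → ℝ)) (Lip : NNReal)
    (hG : LipschitzOnWith Lip G (closedBall q R))
    (u : Fin m → ℝ) (hu : u ∈ ball q R)
    (A : (Fin m → ℝ) →L[ℝ] (Fin m → ℝ))
    (hA : HasStrongDerivAt G A (closedBall q R) u) :
    ∀ ω > (0 : ℝ), ∃ δ > (0 : ℝ), ball u δ ⊆ closedBall q R ∧
      ∀ (c : Fin m → ℝ) (r : ℝ), 0 < r → closedBall c r ⊆ ball u δ →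
        |jContentOuter (G '' closedBall c r) / (2 * r) ^ m -
          abs (LinearMap.det (A : (Fin m → ℝ) →ₗ[ℝ] (Fin m → ℝ)))| < ω :=
  volume_image_cube_strong_deriv_general q R G u A hA
end
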